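/- arXiv:1806.10320 — 3 statements merged into one kernel-verified Lean document; each statement's English description precedes it below -/
import Mathlib

section
/- Let 1 < β ≤ 2, let M ≥ 2 be an integer, let L > 0 and h = L/M. Then for every vector v = (v_0, …, v_M) ∈ ℝ^{M+1} with v_0 = v_M = 0: −h^{−β} · h · Σ_{i=1}^{M−1} (Σ_{k=i−M}^{i} g_k^{(β)} v_{i−k}) v_i ≤ −c_*^{(β)} (2L)^{−β} · h · Σ_{i=1}^{M−1} v_i². -/
/-- The fractional centred difference coefficients
`g_k^{(β)} = (−1)^k Γ(β+1) / (Γ(β/2 − k + 1) Γ(β/2 + k + 1))`. -/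
noncomputable def g (β : ℝ) (k : ℤ) : ℝ :=
  (-1 : ℝ) ^ k * Real.Gamma (β + 1) /
    (Real.Gamma (β / 2 - k + 1) * Real.Gamma (β / 2 + k + 1))

/-- The constant `r_β`. -/
noncomputable def rbeta (β : ℝ) : ℝ :=
  Real.exp (-2) * ((4 - β) * (2 - β) * β) / ((6 + β) * (4 + β) * (2 + β)) *
    (Real.Gamma (β + 1) / (Real.Gamma (β / 2 + 1)) ^ 2) * (3 + β / 2) ^ (β + 1)

/-- The constant `c_*^{(β)} = (2/β) r_β`. -/
noncomputable def cstar (β : ℝ) : ℝ := 2 / β * rbeta β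

/- ## Auxiliary definitions and lemmas -/

/-- Partial products of the factors `(2j+2-β)/(2j+2+β)`. -/
noncomputable def Pp (β : ℝ) (m : ℕ) : ℝ :=
  ∏ j ∈ Finset.range m, ((2*(j:ℝ)+2-β)/(2*(j:ℝ)+2+β))

section aux
variable {β : ℝ}

lemma g_zero_eq : g β 0 = Real.Gamma (β+1) / (Real.Gamma (β/2+1))^2 := by
  simp [g, sq]

lemma g_zero_pos (hβ1 : 1 < β) : 0 < g β 0 := by
  rw [g_zero_eq]
  have h1 : 0 < Real.Gamma (β+1) := Real.Gamma_pos_of_pos (by linarith)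
  have h2 : 0 < Real.Gamma (β/2+1) := Real.Gamma_pos_of_pos (by linarith)
  positivity

lemma g_symm (k : ℤ) : g β (-k) = g β k := by
  unfold g
  have h1 : ((-1:ℝ)) ^ (-k) = (-1:ℝ)^k := by
    rw [zpow_neg, ← inv_zpow]; norm_num
  rw [h1]
  have h2 : β / 2 - (-k : ℤ) + 1 = β / 2 + k + 1 := by push_cast; ring
  have h3 : β / 2 + (-k : ℤ) + 1 = β / 2 - k + 1 := by push_cast; ring
  rw [h2, h3, mul_comm (Real.Gamma (β / 2 + k + 1))]

lemma g_nat (m : ℕ) : g β m =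
    (-1:ℝ)^m * Real.Gamma (β+1) /
      (Real.Gamma (β/2-(m:ℝ)+1) * Real.Gamma (β/2+(m:ℝ)+1)) := by
  unfold g
  rw [zpow_natCast]
  norm_num

lemma Pp_zero : Pp β 0 = 1 := by simp [Pp]

lemma Pp_succ (m : ℕ) : Pp β (m+1) = Pp β m * ((2*(m:ℝ)+2-β)/(2*(m:ℝ)+2+β)) := by
  unfold Pp; rw [Finset.prod_range_succ]

lemma Pp_two : Pp β 2 = ((2-β)/(2+β)) * ((4-β)/(4+β)) := by
  unfold Pp
  rw [Finset.prod_range_succ, Finset.prod_range_one]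
  norm_num

lemma Pp_nonneg (hβ2 : β ≤ 2) (hβ0 : 0 < β) (m : ℕ) : 0 ≤ Pp β m := by
  apply Finset.prod_nonneg
  intro j _
  have : (0:ℝ) ≤ 2*(j:ℝ)+2-β := by
    have : (0:ℝ) ≤ (j:ℝ) := Nat.cast_nonneg j
    linarith
  positivity

lemma Pp_anti (hβ2 : β ≤ 2) (hβ0 : 0 < β) {m n : ℕ} (hmn : m ≤ n) : Pp β n ≤ Pp β m := by
  induction n with
  | zero => simp_all
  | succ n ih =>
    rcases Nat.lt_or_ge m (n+1) with hlt | hge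
    · have hn := ih (Nat.lt_succ_iff.mp hlt)
      refine le_trans ?_ hn
      rw [Pp_succ]
      have h0 : (0:ℝ) ≤ (n:ℝ) := Nat.cast_nonneg n
      have h1 : (0:ℝ) ≤ 2*(n:ℝ)+2-β := by linarith
      have h2 : (2*(n:ℝ)+2-β)/(2*(n:ℝ)+2+β) ≤ 1 := by
        rw [div_le_one (by linarith)]; linarith
      calc Pp β n * ((2*(n:ℝ)+2-β)/(2*(n:ℝ)+2+β)) ≤ Pp β n * 1 :=
            mul_le_mul_of_nonneg_left h2 (Pp_nonneg hβ2 hβ0 n)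
        _ = Pp β n := mul_one _
    · have : m = n+1 := le_antisymm hmn hge
      simp [this]

lemma gB (hβ1 : 1 < β) (n : ℕ) :
    g β ((n:ℕ)+2) * (2*(n:ℝ)+4+β) = g β ((n:ℕ)+1) * (2*(n:ℝ)+2-β) := by
  have h2 : g β ((n:ℕ)+2) = (-1:ℝ)^n * Real.Gamma (β+1) /
      (Real.Gamma (β/2-(n:ℝ)-1) * Real.Gamma ((β/2+(n:ℝ)+2)+1)) := by
    have := g_nat (β := β) (n+2)
    push_cast at this ⊢
    rw [this]
    ring_nf
  have h1 : g β ((n:ℕ)+1) = -((-1:ℝ)^n) * Real.Gamma (β+1) /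
      (Real.Gamma ((β/2-(n:ℝ)-1)+1) * Real.Gamma (β/2+(n:ℝ)+2)) := by
    have := g_nat (β := β) (n+1)
    push_cast at this ⊢
    rw [this]
    ring_nf
  rw [h1, h2]
  have hpos : 0 < β/2+(n:ℝ)+2 := by
    have : (0:ℝ) ≤ (n:ℝ) := Nat.cast_nonneg n
    linarith
  have hΓ2pos : 0 < Real.Gamma (β/2+(n:ℝ)+2) := Real.Gamma_pos_of_pos hpos
  have hG3 : Real.Gamma ((β/2+(n:ℝ)+2)+1) = (β/2+(n:ℝ)+2) * Real.Gamma (β/2+(n:ℝ)+2) :=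
    Real.Gamma_add_one (ne_of_gt hpos)
  rw [hG3]
  by_cases hΓ : Real.Gamma (β/2-(n:ℝ)-1) = 0
  · rw [hΓ]
    by_cases hx : β/2-(n:ℝ)-1 = 0
    · have hb : 2*(n:ℝ)+2-β = 0 := by linarith [hx]
      rw [hb]
      simp
    · have hG1 : Real.Gamma ((β/2-(n:ℝ)-1)+1) = (β/2-(n:ℝ)-1) * Real.Gamma (β/2-(n:ℝ)-1) :=
        Real.Gamma_add_one hx
      rw [hG1, hΓ]
      simp
  · have hx : β/2-(n:ℝ)-1 ≠ 0 := by
      intro h0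
      rw [h0] at hΓ
      exact hΓ Real.Gamma_zero
    have hG1 : Real.Gamma ((β/2-(n:ℝ)-1)+1) = (β/2-(n:ℝ)-1) * Real.Gamma (β/2-(n:ℝ)-1) :=
      Real.Gamma_add_one hx
    rw [hG1]
    have hy : β/2+(n:ℝ)+2 ≠ 0 := ne_of_gt hpos
    have e1 : (2*(n:ℝ)+4+β) = 2*(β/2+(n:ℝ)+2) := by ring
    have e2 : (2*(n:ℝ)+2-β) = -2*(β/2-(n:ℝ)-1) := by ring
    rw [e1, e2, div_mul_eq_mul_div, div_mul_eq_mul_div]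
    rw [show (-1:ℝ)^n * Real.Gamma (β+1) * (2*(β/2+(n:ℝ)+2))
        = (2*((-1:ℝ)^n * Real.Gamma (β+1))) * (β/2+(n:ℝ)+2) from by ring]
    rw [show Real.Gamma (β/2-(n:ℝ)-1) * ((β/2+(n:ℝ)+2) * Real.Gamma (β/2+(n:ℝ)+2))
        = (Real.Gamma (β/2-(n:ℝ)-1) * Real.Gamma (β/2+(n:ℝ)+2)) * (β/2+(n:ℝ)+2) from by ring]
    rw [mul_div_mul_right _ _ hy]
    rw [show -(-1:ℝ)^n * Real.Gamma (β+1) * (-2*(β/2-(n:ℝ)-1))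
        = (2*((-1:ℝ)^n * Real.Gamma (β+1))) * (β/2-(n:ℝ)-1) from by ring]
    rw [show (β/2-(n:ℝ)-1) * Real.Gamma (β/2-(n:ℝ)-1) * Real.Gamma (β/2+(n:ℝ)+2)
        = (Real.Gamma (β/2-(n:ℝ)-1) * Real.Gamma (β/2+(n:ℝ)+2)) * (β/2-(n:ℝ)-1) from by ring]
    rw [mul_div_mul_right _ _ hx]

lemma g_prod (hβ1 : 1 < β) (n : ℕ) :
    g β ((n:ℕ)+1) * (2*(n:ℝ)+2+β) = -β * g β 0 * Pp β n := by
  induction n with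
  | zero =>
    have hb2 : (0:ℝ) < β/2 := by linarith
    have hΓpos : 0 < Real.Gamma (β/2) := Real.Gamma_pos_of_pos hb2
    have h1 : Real.Gamma (β/2+1) = (β/2) * Real.Gamma (β/2) :=
      Real.Gamma_add_one (ne_of_gt hb2)
    have h2 : Real.Gamma (β/2+1+1) = (β/2+1) * Real.Gamma (β/2+1) :=
      Real.Gamma_add_one (by linarith)
    have hg1 : g β ((0:ℕ)+1) = -1 * Real.Gamma (β+1) /
        (Real.Gamma (β/2) * Real.Gamma (β/2+1+1)) := by
      have := g_nat (β := β) 1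
      have e0 : ((0:ℕ):ℤ)+1 = ((1:ℕ):ℤ) := by norm_num
      rw [e0, this]
      norm_num
    rw [hg1, g_zero_eq, h2, h1, Pp_zero]
    have hne : Real.Gamma (β/2) ≠ 0 := ne_of_gt hΓpos
    field_simp
    ring
  | succ n ih =>
    have hn0 : (0:ℝ) ≤ (n:ℝ) := Nat.cast_nonneg n
    have hpos : (0:ℝ) < 2*(n:ℝ)+2+β := by linarith
    apply mul_right_cancel₀ (ne_of_gt hpos)
    have hc : (((n+1:ℕ)):ℤ)+1 = ((n:ℕ):ℤ)+2 := by push_cast; ring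
    have hc2 : (2*((n+1:ℕ):ℝ)+2+β) = 2*(n:ℝ)+4+β := by push_cast; ring
    rw [hc, hc2]
    have e : Pp β (n+1) * (2*(n:ℝ)+2+β) = Pp β n * (2*(n:ℝ)+2-β) := by
      rw [Pp_succ]
      field_simp
    have gbn := gB hβ1 n
    calc g β ((n:ℕ)+2) * (2*(n:ℝ)+4+β) * (2*(n:ℝ)+2+β)
        = (g β ((n:ℕ)+1) * (2*(n:ℝ)+2+β)) * (2*(n:ℝ)+2-β) := by
          linear_combination (2*(n:ℝ)+2+β) * gbn
      _ = (-β * g β 0 * Pp β n) * (2*(n:ℝ)+2-β) := by rw [ih]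
      _ = -β * g β 0 * (Pp β n * (2*(n:ℝ)+2-β)) := by ring
      _ = -β * g β 0 * (Pp β (n+1) * (2*(n:ℝ)+2+β)) := by rw [e]
      _ = -β * g β 0 * Pp β (n+1) * (2*(n:ℝ)+2+β) := by ring

lemma g_nonpos_nat (hβ1 : 1 < β) (hβ2 : β ≤ 2) (n : ℕ) : g β ((n:ℕ)+1) ≤ 0 := by
  have hn0 : (0:ℝ) ≤ (n:ℝ) := Nat.cast_nonneg n
  have hpos : (0:ℝ) < 2*(n:ℝ)+2+β := by linarith
  have hp := g_prod hβ1 n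
  have heq : g β ((n:ℕ)+1) = (-β * g β 0 * Pp β n) / (2*(n:ℝ)+2+β) :=
    (eq_div_iff (ne_of_gt hpos)).mpr hp
  rw [heq]
  apply div_nonpos_of_nonpos_of_nonneg _ (le_of_lt hpos)
  have h1 : -β * g β 0 ≤ 0 := by nlinarith [g_zero_pos (β := β) hβ1]
  exact mul_nonpos_of_nonpos_of_nonneg h1 (Pp_nonneg hβ2 (by linarith) n)

lemma g_nonpos (hβ1 : 1 < β) (hβ2 : β ≤ 2) (k : ℤ) (hk : k ≠ 0) : g β k ≤ 0 := by
  rcases lt_or_gt_of_ne hk with hneg | hpos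
  · have hn : k = -((((-k).toNat - 1 : ℕ) : ℤ) + 1) := by omega
    rw [hn, g_symm]
    exact g_nonpos_nat hβ1 hβ2 _
  · have hn : k = (((k.toNat - 1 : ℕ) : ℤ) + 1) := by omega
    rw [hn]
    exact g_nonpos_nat hβ1 hβ2 _

lemma sum_g (hβ1 : 1 < β) (n : ℕ) :
    ∑ t ∈ Finset.range n, g β ((t:ℕ)+1) = g β 0/2 * Pp β n - g β 0/2 := by
  have key : ∀ t : ℕ, g β ((t:ℕ)+1)
      = g β 0/2 * Pp β (t+1) - g β 0/2 * Pp β t := by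
    intro t
    have ht0 : (0:ℝ) ≤ (t:ℝ) := Nat.cast_nonneg t
    have hpos : (0:ℝ) < 2*(t:ℝ)+2+β := by linarith
    have hp := g_prod hβ1 t
    have heq : g β ((t:ℕ)+1) = (-β * g β 0 * Pp β t) / (2*(t:ℝ)+2+β) :=
      (eq_div_iff (ne_of_gt hpos)).mpr hp
    rw [heq, Pp_succ t]
    field_simp
    ring
  calc ∑ t ∈ Finset.range n, g β ((t:ℕ)+1)
      = ∑ t ∈ Finset.range n, (g β 0/2 * Pp β (t+1) - g β 0/2 * Pp β t) :=
        Finset.sum_congr rfl (fun t _ => key t)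
    _ = g β 0/2 * Pp β n - g β 0/2 * Pp β 0 :=
        Finset.sum_range_sub (fun m => g β 0/2 * Pp β m) n
    _ = g β 0/2 * Pp β n - g β 0/2 := by rw [Pp_zero, mul_one]

lemma sum_Ioc_g (hβ1 : 1 < β) (n : ℕ) :
    ∑ k ∈ Finset.Ioc (0:ℤ) (n:ℤ), g β k = g β 0/2 * Pp β n - g β 0/2 := by
  rw [← sum_g hβ1 n]
  apply Finset.sum_nbij' (i := fun k => (k - 1).toNat) (j := fun t => ((t:ℕ):ℤ)+1)
  · intro a ha
    simp only [Finset.mem_Ioc] at ha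
    simp only [Finset.mem_range]
    omega
  · intro a ha
    simp only [Finset.mem_range] at ha
    simp only [Finset.mem_Ioc]
    omega
  · intro a ha
    simp only [Finset.mem_Ioc] at ha
    omega
  · intro a ha
    simp only [Finset.mem_range] at ha
    omega
  · intro a ha
    simp only [Finset.mem_Ioc] at ha
    congr 1
    omega

/-- The row sums of the coefficient matrix. -/
lemma rho (hβ1 : 1 < β) (M a : ℕ) (hM : 2 ≤ M) (ha1 : 1 ≤ a) (haM : a ≤ M-1) :
    ∑ j ∈ Finset.Icc (1:ℤ) ((M:ℤ)-1), g β ((a:ℤ)-j)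
      = g β 0/2 * Pp β (a-1) + g β 0/2 * Pp β (M-1-a) := by
  have e1 : Finset.Icc (1:ℤ) ((M:ℤ)-1) = Finset.Ioc (0:ℤ) ((M:ℤ)-1) := by
    ext x
    simp only [Finset.mem_Icc, Finset.mem_Ioc]
    omega
  have h0a : (0:ℤ) ≤ (a:ℤ) := by positivity
  have haM' : (a:ℤ) ≤ (M:ℤ)-1 := by omega
  rw [e1, ← Finset.Ioc_union_Ioc_eq_Ioc h0a haM',
    Finset.sum_union (by
      rw [Finset.disjoint_left]
      intro x hx1 hx2
      simp only [Finset.mem_Ioc] at hx1 hx2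
      omega)]
  have sub1 : ∑ j ∈ Finset.Ioc (0:ℤ) (a:ℤ), g β ((a:ℤ)-j)
      = g β 0/2 * Pp β (a-1) + g β 0/2 := by
    have r1 : ∑ j ∈ Finset.Ioc (0:ℤ) (a:ℤ), g β ((a:ℤ)-j)
        = ∑ k ∈ Finset.Ico (0:ℤ) (a:ℤ), g β k := by
      apply Finset.sum_nbij' (i := fun j => (a:ℤ) - j) (j := fun k => (a:ℤ) - k)
      · intro x hx
        simp only [Finset.mem_Ioc] at hx
        simp only [Finset.mem_Ico]
        omega
      · intro x hx
        simp only [Finset.mem_Ico] at hx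
        simp only [Finset.mem_Ioc]
        omega
      · intro x _; ring
      · intro x _; ring
      · intro x _; rfl
    have r2 : Finset.Ico (0:ℤ) (a:ℤ) = insert (0:ℤ) (Finset.Ioc (0:ℤ) ((a:ℤ)-1)) := by
      ext x
      simp only [Finset.mem_Ico, Finset.mem_insert, Finset.mem_Ioc]
      omega
    have r3 : ((a-1:ℕ):ℤ) = (a:ℤ)-1 := by omega
    rw [r1, r2, Finset.sum_insert (by simp), ← r3, sum_Ioc_g hβ1 (a-1)]
    ring
  have sub2 : ∑ j ∈ Finset.Ioc (a:ℤ) ((M:ℤ)-1), g β ((a:ℤ)-j)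
      = g β 0/2 * Pp β (M-1-a) - g β 0/2 := by
    have r1 : ∑ j ∈ Finset.Ioc (a:ℤ) ((M:ℤ)-1), g β ((a:ℤ)-j)
        = ∑ k ∈ Finset.Ioc (0:ℤ) ((M:ℤ)-1-(a:ℤ)), g β k := by
      apply Finset.sum_nbij' (i := fun j => j - (a:ℤ)) (j := fun k => k + (a:ℤ))
      · intro x hx
        simp only [Finset.mem_Ioc] at hx
        simp only [Finset.mem_Ioc]
        omega
      · intro x hx
        simp only [Finset.mem_Ioc] at hx
        simp only [Finset.mem_Ioc]
        omega
      · intro x _; ring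
      · intro x _; ring
      · intro x _
        rw [show (a:ℤ) - x = -(x - (a:ℤ)) from by ring, g_symm]
    have r3 : ((M-1-a:ℕ):ℤ) = (M:ℤ)-1-(a:ℤ) := by omega
    rw [r1, ← r3, sum_Ioc_g hβ1 (M-1-a)]
  rw [sub1, sub2]
  ring

lemma bern (hβ1 : 1 < β) {a : ℝ} (ha : 0 < a) :
    (a/(a+2))^β ≤ a/(a+2*β) := by
  have h2a : (0:ℝ) ≤ 2/a := by positivity
  have h1p : (0:ℝ) < 1 + 2/a := by positivity
  have hB : (1:ℝ) + β*(2/a) ≤ (1+2/a)^β :=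
    one_add_mul_self_le_rpow_one_add (by linarith) (le_of_lt hβ1)
  have key : (a/(a+2))^β * (1+2/a)^β = 1 := by
    rw [← Real.mul_rpow (by positivity) (le_of_lt h1p)]
    rw [show a/(a+2)*(1+2/a) = 1 from by field_simp]
    exact Real.one_rpow β
  have heq : (a/(a+2))^β = ((1+2/a)^β)⁻¹ := eq_inv_of_mul_eq_one_left key
  rw [heq]
  have h2 : (a+2*β)/a ≤ (1+2/a)^β := by
    refine le_trans (le_of_eq ?_) hB
    field_simp
  have h3 : (0:ℝ) < (a+2*β)/a := by
    have : (0:ℝ) < a + 2*β := by linarith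
    positivity
  calc ((1+2/a)^β)⁻¹ ≤ ((a+2*β)/a)⁻¹ := inv_anti₀ h3 h2
    _ = a/(a+2*β) := by rw [inv_div]

lemma prod_tail (hβ1 : 1 < β) (hβ2 : β ≤ 2) (n : ℕ) (hn : 2 ≤ n) :
    Pp β 2 * ((6-β)/(2*(n:ℝ)+2-β))^β ≤ Pp β n := by
  induction n, hn using Nat.le_induction with
  | base =>
    have : (6-β)/(2*((2:ℕ):ℝ)+2-β) = (1:ℝ) := by
      norm_num
      exact (by linarith : (6:ℝ)-β ≠ 0)
    rw [this, Real.one_rpow, mul_one]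
  | succ n hn ih =>
    have hn2 : (2:ℝ) ≤ (n:ℝ) := by exact_mod_cast hn
    have ha : (0:ℝ) < 2*(n:ℝ)+2-β := by linarith
    have ha6 : (0:ℝ) < 6-β := by linarith
    have hfn : ((2*(n:ℝ)+2-β)/(2*(n:ℝ)+4-β))^β ≤ (2*(n:ℝ)+2-β)/(2*(n:ℝ)+2+β) := by
      have hb := bern hβ1 ha
      rw [show (2*(n:ℝ)+2-β)+2 = 2*(n:ℝ)+4-β from by ring,
        show (2*(n:ℝ)+2-β)+2*β = 2*(n:ℝ)+2+β from by ring] at hb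
      exact hb
    have hc : ((n+1:ℕ):ℝ) = (n:ℝ)+1 := by push_cast; ring
    have h4 : (0:ℝ) < 2*(n:ℝ)+4-β := by linarith
    have hq1 : (0:ℝ) ≤ (6-β)/(2*(n:ℝ)+2-β) := div_nonneg (by linarith) (le_of_lt ha)
    have hq2 : (0:ℝ) ≤ (2*(n:ℝ)+2-β)/(2*(n:ℝ)+4-β) :=
      div_nonneg (le_of_lt ha) (by linarith)
    have hrw : ((6-β)/(2*(n:ℝ)+2-β)) * ((2*(n:ℝ)+2-β)/(2*(n:ℝ)+4-β))
        = (6-β)/(2*((n:ℝ)+1)+2-β) := by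
      rw [div_mul_div_comm, mul_comm (6-β), mul_div_mul_left _ _ (ne_of_gt ha)]
      ring_nf
    rw [Pp_succ n, hc, ← hrw]
    calc Pp β 2 * (((6-β)/(2*(n:ℝ)+2-β)) * ((2*(n:ℝ)+2-β)/(2*(n:ℝ)+4-β)))^β
        = Pp β 2 * ((6-β)/(2*(n:ℝ)+2-β))^β * ((2*(n:ℝ)+2-β)/(2*(n:ℝ)+4-β))^β := by
          rw [Real.mul_rpow hq1 hq2, ← mul_assoc]
      _ ≤ Pp β n * ((2*(n:ℝ)+2-β)/(2*(n:ℝ)+2+β)) :=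
          mul_le_mul ih hfn (Real.rpow_nonneg hq2 β) (Pp_nonneg hβ2 (by linarith) n)

lemma core (hβ1 : 1 < β) (hβ2 : β ≤ 2) (M : ℕ) (hM : 2 ≤ M) :
    Real.exp (-2) * Pp β 2 * ((6+β)/(4*(M:ℝ)))^β ≤ Pp β (M-2) := by
  have hβ0 : (0:ℝ) < β := by linarith
  have hM2 : (2:ℝ) ≤ (M:ℝ) := by exact_mod_cast hM
  have hx0 : (0:ℝ) ≤ (6+β)/(4*(M:ℝ)) := by positivity
  have hP2 : 0 ≤ Pp β 2 := Pp_nonneg hβ2 hβ0 2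
  have hexp : Real.exp (-2) ≤ 1 := by
    rw [show (1:ℝ) = Real.exp 0 from (Real.exp_zero).symm]
    exact Real.exp_le_exp.mpr (by norm_num)
  have hexp0 : 0 ≤ Real.exp (-2) := le_of_lt (Real.exp_pos _)
  rcases Nat.lt_or_ge M 5 with hM5 | hM5
  · have hsub : M - 2 ≤ 2 := by omega
    have hP : Pp β 2 ≤ Pp β (M-2) := Pp_anti hβ2 hβ0 hsub
    have hx1 : (6+β)/(4*(M:ℝ)) ≤ 1 := by
      rw [div_le_one (by linarith)]
      linarith
    have hrp : ((6+β)/(4*(M:ℝ)))^β ≤ 1 := Real.rpow_le_one hx0 hx1 (le_of_lt hβ0)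
    calc Real.exp (-2) * Pp β 2 * ((6+β)/(4*(M:ℝ)))^β
        ≤ 1 * Pp β 2 * 1 := by gcongr
      _ = Pp β 2 := by ring
      _ ≤ Pp β (M-2) := hP
  · have hn : 2 ≤ M - 2 := by omega
    have hcast : ((M-2:ℕ):ℝ) = (M:ℝ) - 2 := by
      push_cast [Nat.cast_sub hM]
      ring
    have ht := prod_tail hβ1 hβ2 (M-2) hn
    rw [hcast] at ht
    refine le_trans ?_ ht
    have hM5' : (5:ℝ) ≤ (M:ℝ) := by exact_mod_cast hM5
    have hd : (0:ℝ) < 2*((M:ℝ)-2)+2-β := by linarith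
    have hmono : (6+β)/(4*(M:ℝ)) ≤ (6-β)/(2*((M:ℝ)-2)+2-β) := by
      rw [div_le_div_iff₀ (by linarith) hd]
      nlinarith
    have hrp := Real.rpow_le_rpow hx0 hmono (le_of_lt hβ0)
    calc Real.exp (-2) * Pp β 2 * ((6+β)/(4*(M:ℝ)))^β
        ≤ 1 * Pp β 2 * ((6-β)/(2*((M:ℝ)-2)+2-β))^β := by gcongr
      _ = Pp β 2 * ((6-β)/(2*((M:ℝ)-2)+2-β))^β := by ring

lemma cstar_eq (hβ1 : 1 < β) : cstar β = Real.exp (-2) * g β 0 * Pp β 2 * (3+β/2)^β := by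
  have hβ0 : (0:ℝ) < β := by linarith
  have h3 : (3:ℝ)+β/2 ≠ 0 := by linarith
  unfold cstar rbeta
  rw [← g_zero_eq, Pp_two, Real.rpow_add_one h3 β]
  have h2 : (2:ℝ)+β ≠ 0 := by linarith
  have h4 : (4:ℝ)+β ≠ 0 := by linarith
  have h6 : (6:ℝ)+β ≠ 0 := by linarith
  field_simp
  ring

lemma cstar_bound (hβ1 : 1 < β) (hβ2 : β ≤ 2) (M : ℕ) (hM : 2 ≤ M) :
    cstar β * (2*(M:ℝ))^(-β) ≤ g β 0 * Pp β (M-2) := by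
  have hβ0 : (0:ℝ) < β := by linarith
  have hM2 : (2:ℝ) ≤ (M:ℝ) := by exact_mod_cast hM
  have hg0 : 0 < g β 0 := g_zero_pos hβ1
  have hkey : (3+β/2)^β * (2*(M:ℝ))^(-β) = ((6+β)/(4*(M:ℝ)))^β := by
    rw [show (6+β)/(4*(M:ℝ)) = (3+β/2)/(2*(M:ℝ)) from by
      rw [div_eq_div_iff (by linarith) (by linarith)]; ring]
    rw [Real.div_rpow (by linarith) (by linarith), Real.rpow_neg (by linarith)]
    field_simp
  rw [cstar_eq hβ1]
  calc Real.exp (-2) * g β 0 * Pp β 2 * (3+β/2)^β * (2*(M:ℝ))^(-β)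
      = g β 0 * (Real.exp (-2) * Pp β 2 * ((3+β/2)^β * (2*(M:ℝ))^(-β))) := by ring
    _ = g β 0 * (Real.exp (-2) * Pp β 2 * ((6+β)/(4*(M:ℝ)))^β) := by rw [hkey]
    _ ≤ g β 0 * Pp β (M-2) :=
        mul_le_mul_of_nonneg_left (core hβ1 hβ2 M hM) (le_of_lt hg0)

end aux

/-- Lemma 2.8: the discrete fractional quadratic form bound. For any grid function `v`
vanishing at the endpoints,
`−h^{−β} h Σ_{i=1}^{M−1} (Σ_{k=i−M}^{i} g_k^{(β)} v_{i−k}) v_i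
  ≤ −c_*^{(β)} (2L)^{−β} h Σ_{i=1}^{M−1} v_i²`. -/
theorem quadratic_form_bound (β : ℝ) (hβ1 : 1 < β) (hβ2 : β ≤ 2)
    (M : ℕ) (hM : 2 ≤ M) (L : ℝ) (hL : 0 < L) (h : ℝ) (hh : h = L / M)
    (v : ℤ → ℝ) (hv0 : v 0 = 0) (hvM : v (M : ℤ) = 0) :
    -h ^ (-β) * h *
        ∑ i ∈ Finset.Icc (1 : ℤ) ((M : ℤ) - 1),
          (∑ k ∈ Finset.Icc (i - (M : ℤ)) i, g β k * v (i - k)) * v i ≤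
      -cstar β * (2 * L) ^ (-β) * h *
        ∑ i ∈ Finset.Icc (1 : ℤ) ((M : ℤ) - 1), v i ^ 2 := by
  have hβ0 : (0:ℝ) < β := by linarith
  have hM0 : (0:ℝ) < (M:ℝ) := by positivity
  have hM2 : (2:ℝ) ≤ (M:ℝ) := by exact_mod_cast hM
  have hh0 : 0 < h := by rw [hh]; positivity
  set I := Finset.Icc (1 : ℤ) ((M : ℤ) - 1) with hI
  -- Step 1: rewrite inner sums
  have step1 : ∀ i ∈ I,
      (∑ k ∈ Finset.Icc (i - (M : ℤ)) i, g β k * v (i - k))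
        = ∑ j ∈ I, g β (i-j) * v j := by
    intro i hi
    have e1 : ∑ k ∈ Finset.Icc (i - (M : ℤ)) i, g β k * v (i - k)
        = ∑ j ∈ Finset.Icc (0:ℤ) (M:ℤ), g β (i-j) * v j := by
      apply Finset.sum_nbij' (i := fun k => i - k) (j := fun j => i - j)
      · intro x hx
        simp only [Finset.mem_Icc] at hx ⊢
        omega
      · intro x hx
        simp only [Finset.mem_Icc] at hx ⊢
        omega
      · intro x _; ring
      · intro x _; ring
      · intro x _
        rw [show i - (i - x) = x from by ring]
    rw [e1]
    symm
    apply Finset.sum_subset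
    · intro x hx
      simp only [hI, Finset.mem_Icc] at hx ⊢
      omega
    · intro x hx hnx
      simp only [hI, Finset.mem_Icc] at hx hnx
      have : x = 0 ∨ x = (M:ℤ) := by omega
      rcases this with h0 | hMx
      · rw [h0, hv0, mul_zero]
      · rw [hMx, hvM, mul_zero]
  -- the quadratic form
  set Q := ∑ i ∈ I, (∑ j ∈ I, g β (i-j) * v j) * v i with hQ
  set S := ∑ i ∈ I, v i ^ 2 with hS
  have hQrw : ∑ i ∈ I, (∑ k ∈ Finset.Icc (i - (M : ℤ)) i, g β k * v (i - k)) * v i = Q := by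
    apply Finset.sum_congr rfl
    intro i hi
    rw [step1 i hi]
  -- Step 2: lower bound Q by the row-sum quadratic form
  have step2 : ∑ i ∈ I, (∑ j ∈ I, g β (i-j)) * (v i)^2 ≤ Q := by
    have expand : ∀ i ∈ I, ∀ j ∈ I,
        g β (i-j) * (v i - v j)^2
          = g β (i-j) * (v i)^2 + g β (i-j) * (v j)^2 - 2 * (g β (i-j) * v j * v i) := by
      intro i _ j _
      ring
    have swap : ∑ i ∈ I, ∑ j ∈ I, g β (i-j) * (v j)^2
        = ∑ i ∈ I, (∑ j ∈ I, g β (i-j)) * (v i)^2 := by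
      rw [Finset.sum_comm]
      apply Finset.sum_congr rfl
      intro j _
      rw [Finset.sum_mul]
      apply Finset.sum_congr rfl
      intro i _
      rw [show j - i = -(i-j) from by ring, g_symm]
    have nonpos : ∑ i ∈ I, ∑ j ∈ I, g β (i-j) * (v i - v j)^2 ≤ 0 := by
      apply Finset.sum_nonpos
      intro i _
      apply Finset.sum_nonpos
      intro j _
      by_cases hij : i = j
      · rw [hij]
        simp
      · have := g_nonpos hβ1 hβ2 (i-j) (by omega)
        have hsq : (0:ℝ) ≤ (v i - v j)^2 := sq_nonneg _
        exact mul_nonpos_of_nonpos_of_nonneg this hsq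
    have e : ∀ i ∈ I, ∑ j ∈ I, g β (i-j) * (v i - v j)^2
        = (∑ j ∈ I, g β (i-j)) * (v i)^2 + (∑ j ∈ I, g β (i-j)*(v j)^2)
          - ((∑ j ∈ I, g β (i-j) * v j) * v i) * 2 := by
      intro i _
      rw [Finset.sum_mul I (fun j => g β (i-j)) ((v i)^2),
          Finset.sum_mul I (fun j => g β (i-j) * v j) (v i),
          Finset.sum_mul I (fun j => g β (i-j) * v j * v i) (2:ℝ),
          ← Finset.sum_add_distrib, ← Finset.sum_sub_distrib]
      exact Finset.sum_congr rfl (fun j _ => by ring)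
    have identity : ∑ i ∈ I, ∑ j ∈ I, g β (i-j) * (v i - v j)^2
        = 2 * (∑ i ∈ I, (∑ j ∈ I, g β (i-j)) * (v i)^2) - 2 * Q := by
      rw [Finset.sum_congr rfl e, Finset.sum_sub_distrib, Finset.sum_add_distrib,
        ← Finset.sum_mul, swap, hQ]
      ring
    linarith [identity, nonpos]
  -- Step 3: row sums are bounded below
  have hg0 : 0 < g β 0 := g_zero_pos hβ1
  have step3 : ∀ i ∈ I, cstar β * (2*(M:ℝ))^(-β) ≤ ∑ j ∈ I, g β (i-j) := by
    intro i hi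
    simp only [hI, Finset.mem_Icc] at hi
    set a := i.toNat with haa
    have hia : (a:ℤ) = i := by omega
    have ha1 : 1 ≤ a := by omega
    have haM : a ≤ M - 1 := by omega
    have hrho := rho hβ1 M a hM ha1 haM
    rw [hia] at hrho
    rw [hI, hrho]
    have hb1 : Pp β (M-2) ≤ Pp β (a-1) := Pp_anti hβ2 hβ0 (by omega)
    have hb2 : Pp β (M-2) ≤ Pp β (M-1-a) := Pp_anti hβ2 hβ0 (by omega)
    have := cstar_bound hβ1 hβ2 M hM
    nlinarith [hg0]
  -- combine: key inequality
  have key : cstar β * (2*(M:ℝ))^(-β) * S ≤ Q := by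
    refine le_trans ?_ step2
    rw [hS, Finset.mul_sum]
    apply Finset.sum_le_sum
    intro i hi
    exact mul_le_mul_of_nonneg_right (step3 i hi) (sq_nonneg _)
  -- final algebra
  have hrpos : (0:ℝ) < h^(-β) := Real.rpow_pos_of_pos hh0 _
  have hLrw : (2*L)^(-β) = (2*(M:ℝ))^(-β) * h^(-β) := by
    rw [show 2*L = (2*(M:ℝ)) * h from by rw [hh]; field_simp]
    exact Real.mul_rpow (by positivity) (le_of_lt hh0)
  rw [hQrw, hLrw]
  have hmul := mul_le_mul_of_nonneg_left key (le_of_lt (mul_pos hrpos hh0))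
  nlinarith [hmul]
end

section
/- Let 1 < β ≤ 2, let M ≥ 2 be an integer, let K > 0, h > 0, σ ∈ (0,1], and let c > 0 (in the paper, c = ĉ_0^{(n)} > 0). If real numbers w_0, w_1, …, w_M satisfy w_0 = w_M = 0 and c·w_i = −K σ h^{−β} Σ_{k=i−M}^{i} g_k^{(β)} w_{i−k} for all 1 ≤ i ≤ M−1, then w_i = 0 for all 0 ≤ i ≤ M. Consequently, at each time level the implicit difference scheme, whose coefficient matrix is c·I + σ K h^{−β} G with G_{ij} = g_{i−j}^{(β)}, has a unique solution. -/
/-- The coefficient matrix `A = c I + σ K h^{−β} G` of the one-dimensional scheme. -/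
noncomputable def Amat (β : ℝ) (M : ℕ) (K h σ c : ℝ) :
    Matrix (Fin (M - 1)) (Fin (M - 1)) ℝ :=
  Matrix.of fun i j =>
    (if i = j then c else 0) + σ * K * h ^ (-β) * g β ((i : ℤ) - (j : ℤ))

/-- auxiliary telescoping function -/
noncomputable def Vaux (β : ℝ) (k : ℤ) : ℝ :=
  (-1 : ℝ) ^ k * Real.Gamma β / (Real.Gamma (β / 2 + k + 1) * Real.Gamma (β / 2 - k))

lemma neg_one_zpow_cases (k : ℤ) : ((-1:ℝ)^k = 1 ∨ (-1:ℝ)^k = -1) := by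
  rcases Int.even_or_odd k with hk | hk
  · exact Or.inl hk.neg_one_zpow
  · exact Or.inr hk.neg_one_zpow

lemma gamma_sign {β : ℝ} (hβ1 : 1 < β) (hβ2 : β ≤ 2) :
    ∀ m : ℕ, 0 ≤ (-1:ℝ)^m * Real.Gamma (β/2 - m) := by
  intro m
  induction m with
  | zero => simpa using (Real.Gamma_pos_of_pos (by linarith : (0:ℝ) < β/2)).le
  | succ n ih =>
    by_cases hz : β/2 - (n+1 : ℕ) = 0
    · rw [hz, Real.Gamma_zero]; simp
    · have hlt : β/2 - (n+1:ℕ) < 0 := by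
        push_cast
        rcases lt_or_eq_of_le (show β/2 - (n+1:ℕ) ≤ 0 by push_cast; linarith) with h | h
        · push_cast at h; exact h
        · exact absurd (by push_cast at h ⊢; linarith) hz
      have key : Real.Gamma (β/2 - n) = (β/2 - (n+1:ℕ)) * Real.Gamma (β/2 - (n+1:ℕ)) := by
        have := Real.Gamma_add_one hz
        rw [show β/2 - (n+1:ℕ) + 1 = β/2 - n by push_cast; ring] at this
        exact this
      have h2 : (0:ℝ) ≤ (-1:ℝ)^n * ((β/2 - (n+1:ℕ)) * Real.Gamma (β/2 - (n+1:ℕ))) := by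
        rw [← key]; exact ih
      have h3 : (0:ℝ) ≤ ((n+1:ℕ) - β/2) * ((-1:ℝ)^(n+1) * Real.Gamma (β/2 - (n+1:ℕ))) := by
        calc (0:ℝ) ≤ (-1:ℝ)^n * ((β/2 - (n+1:ℕ)) * Real.Gamma (β/2 - (n+1:ℕ))) := h2
        _ = ((n+1:ℕ) - β/2) * ((-1:ℝ)^(n+1) * Real.Gamma (β/2 - (n+1:ℕ))) := by
            rw [pow_succ]; ring
      exact nonneg_of_mul_nonneg_right h3 (by linarith)

lemma gzero_pos {β : ℝ} (hβ1 : 1 < β) : 0 < g β 0 := by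
  unfold g
  simp only [zpow_zero, Int.cast_zero, sub_zero, add_zero, one_mul]
  exact div_pos (Real.Gamma_pos_of_pos (by linarith))
    (mul_pos (Real.Gamma_pos_of_pos (by linarith)) (Real.Gamma_pos_of_pos (by linarith)))

lemma gg_nonpos {β : ℝ} (hβ1 : 1 < β) (hβ2 : β ≤ 2) (k : ℤ) (hk : k ≠ 0) : g β k ≤ 0 := by
  have hsymm : ∀ j : ℤ, g β (-j) = g β j := by
    intro j
    unfold g
    rw [zpow_neg, show β/2 - (-j : ℤ) + 1 = β/2 + j + 1 by push_cast; ring,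
      show β/2 + ((-j : ℤ) : ℝ) + 1 = β/2 - j + 1 by push_cast; ring]
    rcases neg_one_zpow_cases j with h | h <;> rw [h] <;> ring_nf
  have main : ∀ n : ℕ, g β ((n : ℤ) + 1) ≤ 0 := by
    intro n
    unfold g
    rw [show β / 2 - ((n : ℤ) + 1 : ℤ) + 1 = β / 2 - n by push_cast; ring,
      show ((-1:ℝ) ^ ((n:ℤ)+1)) = (-1:ℝ)^(n+1) by
        rw [show ((n:ℤ)+1) = ((n+1 : ℕ) : ℤ) by push_cast; ring, zpow_natCast]]
    have hsign := gamma_sign hβ1 hβ2 n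
    have hpos2 : 0 < Real.Gamma (β/2 + ((n:ℤ)+1:ℤ) + 1) := by
      apply Real.Gamma_pos_of_pos; push_cast; positivity
    have hGpos : 0 < Real.Gamma (β + 1) := Real.Gamma_pos_of_pos (by linarith)
    rcases Nat.even_or_odd n with he | ho
    · rw [he.neg_one_pow, one_mul] at hsign
      rw [pow_succ, he.neg_one_pow, one_mul]
      apply div_nonpos_of_nonpos_of_nonneg (by linarith)
      exact mul_nonneg hsign hpos2.le
    · rw [ho.neg_one_pow] at hsign
      have hle : Real.Gamma (β/2 - n) ≤ 0 := by nlinarith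
      rw [pow_succ, ho.neg_one_pow, neg_mul, one_mul, neg_neg, one_mul]
      apply div_nonpos_of_nonneg_of_nonpos hGpos.le
      exact mul_nonpos_of_nonpos_of_nonneg hle hpos2.le
  rcases lt_or_gt_of_ne hk with hneg | hpos
  · have : ∃ n : ℕ, k = -((n:ℤ)+1) := ⟨(-k-1).toNat, by omega⟩
    obtain ⟨n, rfl⟩ := this
    rw [hsymm]; exact main n
  · have : ∃ n : ℕ, k = (n:ℤ)+1 := ⟨(k-1).toNat, by omega⟩
    obtain ⟨n, rfl⟩ := this
    exact main n

lemma cast_toNat (a : ℤ) (ha : 0 ≤ a) : ((a.toNat : ℝ)) = (a : ℝ) := by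
  exact_mod_cast Int.toNat_of_nonneg ha

lemma telescope {β : ℝ} (hβ1 : 1 < β) (hβ2 : β ≤ 2) (k : ℤ) :
    g β k = Vaux β k - Vaux β (k - 1) := by
  rcases eq_or_lt_of_le hβ2 with h2 | h2
  · -- β = 2
    subst h2
    have hΓ0 : Real.Gamma 0 = 0 := Real.Gamma_zero
    have hΓ1 : Real.Gamma 1 = 1 := Real.Gamma_one
    have hΓ2 : Real.Gamma 2 = 1 := by
      rw [show (2:ℝ) = (1:ℕ) + 1 by norm_num, Real.Gamma_nat_eq_factorial]; norm_num
    have hΓ3 : Real.Gamma 3 = 2 := by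
      rw [show (3:ℝ) = (2:ℕ) + 1 by norm_num, Real.Gamma_nat_eq_factorial]; norm_num
    rcases le_or_gt 2 k with hk | hk
    · have z1 : Real.Gamma ((2:ℝ)/2 - k + 1) = 0 := by
        rw [Real.Gamma_eq_zero_iff]
        exact ⟨(k-2).toNat, by rw [cast_toNat _ (by omega)]; push_cast; ring⟩
      have z2 : Real.Gamma ((2:ℝ)/2 - k) = 0 := by
        rw [Real.Gamma_eq_zero_iff]
        exact ⟨(k-1).toNat, by rw [cast_toNat _ (by omega)]; push_cast; ring⟩
      have z3 : Real.Gamma ((2:ℝ)/2 - (k-1 : ℤ)) = 0 := by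
        rw [Real.Gamma_eq_zero_iff]
        exact ⟨(k-2).toNat, by rw [cast_toNat _ (by omega)]; push_cast; ring⟩
      unfold g Vaux
      rw [z1, z2, z3]
      simp
    rcases le_or_gt k (-2) with hk' | hk'
    · have z1 : Real.Gamma ((2:ℝ)/2 + k + 1) = 0 := by
        rw [Real.Gamma_eq_zero_iff]
        exact ⟨(-k-2).toNat, by rw [cast_toNat _ (by omega)]; push_cast; ring⟩
      have z3 : Real.Gamma ((2:ℝ)/2 + (k-1:ℤ) + 1) = 0 := by
        rw [Real.Gamma_eq_zero_iff]
        exact ⟨(-k-1).toNat, by rw [cast_toNat _ (by omega)]; push_cast; ring⟩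
      unfold g Vaux
      rw [z1, z3]
      simp
    · interval_cases k <;>
        · unfold g Vaux
          norm_num [hΓ0, hΓ1, hΓ2, hΓ3]
  · -- β < 2
    have key : ∀ j : ℤ, Real.Gamma (β/2 + j) ≠ 0 := by
      intro j
      apply Real.Gamma_ne_zero
      intro m hm
      have h1 : (1:ℝ) ≤ ((-(m:ℤ) - j : ℤ):ℝ) ∨ ((-(m:ℤ) - j : ℤ):ℝ) ≤ 0 := by
        rcases le_or_gt 1 (-(m:ℤ) - j) with h | h
        · left; exact_mod_cast h
        · right; exact_mod_cast (by omega : -(m:ℤ) - j ≤ 0)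
      push_cast at h1
      rcases h1 with h | h <;> linarith
    have hA : Real.Gamma (β/2 + k) ≠ 0 := key k
    have hB : Real.Gamma (β/2 - k) ≠ 0 := by
      have := key (-k); push_cast at this
      rwa [show β/2 + -(k:ℝ) = β/2 - k by ring] at this
    have hx : β/2 + (k:ℝ) ≠ 0 := fun hz => hA (by rw [hz]; exact Real.Gamma_zero)
    have hy : β/2 - (k:ℝ) ≠ 0 := fun hz => hB (by rw [hz]; exact Real.Gamma_zero)
    have fA : Real.Gamma (β/2 + k + 1) = (β/2 + k) * Real.Gamma (β/2 + k) :=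
      Real.Gamma_add_one hx
    have fB : Real.Gamma (β/2 - k + 1) = (β/2 - k) * Real.Gamma (β/2 - k) :=
      Real.Gamma_add_one hy
    have fβ : Real.Gamma (β + 1) = β * Real.Gamma β :=
      Real.Gamma_add_one (by positivity)
    unfold g Vaux
    push_cast
    rw [show β/2 + ((k:ℝ) - 1) + 1 = β/2 + k by ring,
      show β/2 - ((k:ℝ) - 1) = β/2 - k + 1 by ring, fA, fB, fβ,
      zpow_sub_one₀ (by norm_num : (-1:ℝ) ≠ 0) k]
    have he : ((-1:ℝ)^k) ≠ 0 := zpow_ne_zero k (by norm_num)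
    set A := Real.Gamma (β/2 + (k:ℝ)) with hAdef
    set B := Real.Gamma (β/2 - (k:ℝ)) with hBdef
    have d1 : (β/2-(k:ℝ))*B*((β/2+(k:ℝ))*A) ≠ 0 :=
      mul_ne_zero (mul_ne_zero hy hB) (mul_ne_zero hx hA)
    have d2 : (β/2+(k:ℝ))*A*B ≠ 0 := mul_ne_zero (mul_ne_zero hx hA) hB
    have d3 : A*((β/2-(k:ℝ))*B) ≠ 0 := mul_ne_zero hA (mul_ne_zero hy hB)
    rw [div_sub_div _ _ d2 d3, div_eq_div_iff d1 (mul_ne_zero d2 d3)]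
    ring

lemma Vaux_nonneg {β : ℝ} (hβ1 : 1 < β) (hβ2 : β ≤ 2) (m : ℕ) : 0 ≤ Vaux β (m : ℤ) := by
  unfold Vaux
  rw [zpow_natCast]
  have hsign := gamma_sign hβ1 hβ2 m
  have hP : 0 < Real.Gamma (β/2 + (m:ℤ) + 1) := by
    apply Real.Gamma_pos_of_pos; push_cast; positivity
  have hG : 0 < Real.Gamma β := Real.Gamma_pos_of_pos (by linarith)
  rw [show ((m:ℤ):ℝ) = (m:ℝ) by push_cast; ring] at *
  rcases Nat.even_or_odd m with he | ho
  · rw [he.neg_one_pow, one_mul] at hsign ⊢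
    exact div_nonneg hG.le (mul_nonneg hP.le hsign)
  · rw [ho.neg_one_pow] at hsign ⊢
    have hle : Real.Gamma (β/2 - m) ≤ 0 := by nlinarith
    exact div_nonneg_iff.mpr (Or.inr ⟨by nlinarith, mul_nonpos_of_nonneg_of_nonpos hP.le hle⟩)

lemma Vaux_neg_symm (β : ℝ) (a : ℤ) : Vaux β (-a - 1) = -Vaux β a := by
  unfold Vaux
  have hp : (-1:ℝ)^(-a-1) = -((-1:ℝ)^a) := by
    rcases Int.even_or_odd a with h | h
    · have h2 : Odd (-a-1) := by obtain ⟨c, rfl⟩ := h; exact ⟨-c-1, by ring⟩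
      rw [h.neg_one_zpow, h2.neg_one_zpow]
    · have h2 : Even (-a-1) := by obtain ⟨c, rfl⟩ := h; exact ⟨-c-1, by ring⟩
      rw [h.neg_one_zpow, h2.neg_one_zpow, neg_neg]
  rw [hp, show β/2 + ((-a-1 : ℤ):ℝ) + 1 = β/2 - a by push_cast; ring,
    show β/2 - ((-a-1 : ℤ):ℝ) = β/2 + a + 1 by push_cast; ring]
  rw [mul_comm (Real.Gamma (β/2 - a))]
  ring

lemma sum_telescope_int (f : ℤ → ℝ) (l : ℤ) :
    ∀ r, l ≤ r → ∑ k ∈ Finset.Icc l r, (f k - f (k-1)) = f r - f (l-1) := by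
  refine Int.le_induction ?_ ?_
  · rw [Finset.Icc_self, Finset.sum_singleton]
  · intro r hr ih
    have hins : Finset.Icc l (r+1) = insert (r+1) (Finset.Icc l r) := by
      ext x; simp only [Finset.mem_Icc, Finset.mem_insert]; omega
    rw [hins, Finset.sum_insert (by simp only [Finset.mem_Icc]; omega), ih,
      show r + 1 - 1 = r from by ring]
    ring

lemma sum_g_nonneg {β : ℝ} (hβ1 : 1 < β) (hβ2 : β ≤ 2) (l r : ℤ) (hl : l ≤ 0) (hr : 0 ≤ r) :
    0 ≤ ∑ k ∈ Finset.Icc l r, g β k := by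
  have := sum_telescope_int (Vaux β) l r (by omega)
  rw [Finset.sum_congr rfl (fun k _ => telescope hβ1 hβ2 k), this,
    show l - 1 = -(-l) - 1 by ring, Vaux_neg_symm, sub_neg_eq_add]
  have h1 : 0 ≤ Vaux β r := by
    have := Vaux_nonneg hβ1 hβ2 r.toNat
    rwa [Int.toNat_of_nonneg hr] at this
  have h2 : 0 ≤ Vaux β (-l) := by
    have := Vaux_nonneg hβ1 hβ2 (-l).toNat
    rwa [Int.toNat_of_nonneg (by omega)] at this
  linarith

lemma part1 {β : ℝ} (hβ1 : 1 < β) (hβ2 : β ≤ 2) (M : ℕ) (hM : 2 ≤ M)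
    (K h σ c : ℝ) (hK : 0 < K) (hh : 0 < h) (hσ1 : 0 < σ) (hc : 0 < c)
    (w : ℤ → ℝ) (hw0 : w 0 = 0) (hwM : w (M : ℤ) = 0)
    (heq : ∀ i : ℤ, 1 ≤ i → i ≤ (M : ℤ) - 1 →
      c * w i = -(K * σ * h ^ (-β)) * ∑ k ∈ Finset.Icc (i - (M : ℤ)) i, g β k * w (i - k)) :
    ∀ i : ℤ, 0 ≤ i → i ≤ (M : ℤ) → w i = 0 := by
  have hq : 0 < K * σ * h ^ (-β) := by positivity
  set q := K * σ * h ^ (-β) with hqdef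
  obtain ⟨i₀, hi₀mem, hmax⟩ := Finset.exists_max_image (Finset.Icc (0:ℤ) (M:ℤ))
    (fun j => |w j|) ⟨0, by simp⟩
  simp only [Finset.mem_Icc] at hi₀mem
  suffices hW : |w i₀| ≤ 0 by
    intro i h0 hM'
    have h1 := hmax i (Finset.mem_Icc.mpr ⟨h0, hM'⟩)
    have h2 := abs_nonneg (w i)
    exact abs_eq_zero.mp (le_antisymm (le_trans h1 hW) h2)
  by_cases hbd : i₀ = 0 ∨ i₀ = (M:ℤ)
  · rcases hbd with rfl | rfl <;> simp [hw0, hwM]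
  push_neg at hbd
  have hi1 : 1 ≤ i₀ := by omega
  have hi2 : i₀ ≤ (M:ℤ) - 1 := by omega
  have hg0 : 0 < g β 0 := gzero_pos hβ1
  have hmem0 : (0:ℤ) ∈ Finset.Icc (i₀ - (M:ℤ)) i₀ := Finset.mem_Icc.mpr ⟨by omega, by omega⟩
  set S := (Finset.Icc (i₀ - (M:ℤ)) i₀).erase 0 with hSdef
  have hsplit : ∑ k ∈ Finset.Icc (i₀ - (M:ℤ)) i₀, g β k * w (i₀ - k)
      = g β 0 * w i₀ + ∑ k ∈ S, g β k * w (i₀ - k) := by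
    rw [← Finset.add_sum_erase _ _ hmem0, sub_zero]
  have hdom : ∑ k ∈ S, -g β k ≤ g β 0 := by
    have h1 := sum_g_nonneg hβ1 hβ2 (i₀ - (M:ℤ)) i₀ (by omega) (by omega)
    rw [← Finset.add_sum_erase _ _ hmem0] at h1
    rw [Finset.sum_neg_distrib]
    linarith
  have habs : |∑ k ∈ S, g β k * w (i₀ - k)| ≤ g β 0 * |w i₀| := by
    calc |∑ k ∈ S, g β k * w (i₀ - k)| ≤ ∑ k ∈ S, |g β k * w (i₀ - k)| :=
          Finset.abs_sum_le_sum_abs _ _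
      _ ≤ ∑ k ∈ S, (-g β k) * |w i₀| := by
          apply Finset.sum_le_sum
          intro k hk
          obtain ⟨hk0, hkI⟩ := Finset.mem_erase.mp hk
          rw [Finset.mem_Icc] at hkI
          have hgk : g β k ≤ 0 := gg_nonpos hβ1 hβ2 k hk0
          rw [abs_mul, abs_of_nonpos hgk]
          exact mul_le_mul_of_nonneg_left
            (hmax (i₀ - k) (Finset.mem_Icc.mpr ⟨by omega, by omega⟩)) (by linarith)
      _ = (∑ k ∈ S, -g β k) * |w i₀| := (Finset.sum_mul _ _ _).symm
      _ ≤ g β 0 * |w i₀| := mul_le_mul_of_nonneg_right hdom (abs_nonneg _)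
  have hI := heq i₀ hi1 hi2
  rw [hsplit] at hI
  have hkey : (c + q * g β 0) * w i₀ = -q * ∑ k ∈ S, g β k * w (i₀ - k) := by
    linear_combination hI
  have hfin : (c + q * g β 0) * |w i₀| ≤ q * (g β 0 * |w i₀|) := by
    have e1 : (c + q * g β 0) * |w i₀| = |(c + q * g β 0) * w i₀| := by
      rw [abs_mul, abs_of_pos (by positivity : (0:ℝ) < c + q * g β 0)]
    rw [e1, hkey, abs_mul, abs_neg, abs_of_pos hq]
    exact mul_le_mul_of_nonneg_left habs hq.le
  nlinarith [abs_nonneg (w i₀)]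

lemma part2 (β : ℝ) (hβ1 : 1 < β) (hβ2 : β ≤ 2) (M : ℕ) (hM : 2 ≤ M)
    (K h σ c : ℝ) (hK : 0 < K) (hh : 0 < h) (hσ1 : 0 < σ) (hc : 0 < c)
    (z : Fin (M-1) → ℝ) (hz : (Amat β M K h σ c).mulVec z = 0) : z = 0 := by
  set q := K * σ * h ^ (-β) with hqdef
  classical
  set w : ℤ → ℝ := fun i =>
    if hcond : 1 ≤ i ∧ i ≤ (M:ℤ) - 1 then z ⟨(i-1).toNat, by omega⟩ else 0 with hwdef
  have hw0 : w 0 = 0 := by rw [hwdef]; simp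
  have hwM : w (M:ℤ) = 0 := by
    rw [hwdef]; simp only []; rw [dif_neg (by omega)]
  -- express row equation
  have hrow : ∀ p : Fin (M-1),
      c * z p + q * ∑ j : Fin (M-1), g β ((p:ℤ) - (j:ℤ)) * z j = 0 := by
    intro p
    have := congrFun hz p
    rw [Matrix.mulVec, dotProduct] at this
    simp only [Amat, Matrix.of_apply, Pi.zero_apply] at this
    rw [Finset.sum_congr rfl (fun j _ => add_mul _ _ _), Finset.sum_add_distrib] at this
    rw [Finset.sum_congr rfl (fun j (_ : j ∈ Finset.univ) => show
      (if p = j then c else 0) * z j = if p = j then c * z j else 0 by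
        split <;> simp), Finset.sum_ite_eq _ p _] at this
    simp only [Finset.mem_univ, if_true] at this
    calc c * z p + q * ∑ j : Fin (M-1), g β ((p:ℤ) - (j:ℤ)) * z j
        = c * z p + ∑ j : Fin (M-1), σ * K * h ^ (-β) * g β ((p:ℤ) - (j:ℤ)) * z j := by
          rw [Finset.mul_sum]
          congr 1
          exact Finset.sum_congr rfl (fun j _ => by rw [hqdef]; ring)
      _ = 0 := this
  -- verify heq for w
  have heqw : ∀ i : ℤ, 1 ≤ i → i ≤ (M : ℤ) - 1 →
      c * w i = -(K * σ * h ^ (-β)) * ∑ k ∈ Finset.Icc (i - (M : ℤ)) i, g β k * w (i - k) := by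
    intro i hi1 hi2
    have hp : (i - 1).toNat < M - 1 := by omega
    set p : Fin (M-1) := ⟨(i-1).toNat, hp⟩ with hpdef
    have hpi : (p:ℤ) = i - 1 := by
      rw [hpdef]; simp only []; exact_mod_cast Int.toNat_of_nonneg (by omega)
    -- step 1: reindex sum over k to sum over j = i - k
    have step1 : ∑ k ∈ Finset.Icc (i - (M:ℤ)) i, g β k * w (i - k)
        = ∑ j ∈ Finset.Icc (0:ℤ) (M:ℤ), g β (i - j) * w j := by
      apply Finset.sum_bij' (fun k _ => i - k) (fun j _ => i - j)
      · intro k hk; rw [Finset.mem_Icc] at *; omega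
      · intro j hj; rw [Finset.mem_Icc] at *; omega
      · intro k hk; ring
      · intro j hj; ring
      · intro k hk; rw [show i - (i - k) = k by ring]
    -- step 2: restrict to Icc 1 (M-1)
    have step2 : ∑ j ∈ Finset.Icc (0:ℤ) (M:ℤ), g β (i - j) * w j
        = ∑ j ∈ Finset.Icc (1:ℤ) ((M:ℤ)-1), g β (i - j) * w j := by
      symm
      apply Finset.sum_subset
      · intro x hx; rw [Finset.mem_Icc] at *; omega
      · intro x hx1 hx2
        rw [Finset.mem_Icc] at hx1 hx2
        have : w x = 0 := by rw [hwdef]; simp only []; rw [dif_neg (by omega)]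
        rw [this, mul_zero]
    -- step 3: to Fin sum
    have step3 : ∑ j ∈ Finset.Icc (1:ℤ) ((M:ℤ)-1), g β (i - j) * w j
        = ∑ j : Fin (M-1), g β ((p:ℤ) - (j:ℤ)) * z j := by
      apply Finset.sum_bij' (fun (j : ℤ) (hj : j ∈ Finset.Icc (1:ℤ) ((M:ℤ)-1)) =>
          (⟨(j-1).toNat, by rw [Finset.mem_Icc] at hj; omega⟩ : Fin (M-1)))
        (fun j' _ => (j' : ℤ) + 1)
      case hi => intro j hj; exact Finset.mem_univ _
      case hj =>
        intro j' _
        rw [Finset.mem_Icc]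
        have := j'.isLt
        omega
      case left_neg =>
        intro j hj
        rw [Finset.mem_Icc] at hj
        simp only [Fin.val_mk]
        omega
      case right_neg =>
        intro j' _
        apply Fin.ext
        simp
      case h =>
        intro j hj
        rw [Finset.mem_Icc] at hj
        have hwj : w j = z ⟨(j-1).toNat, by omega⟩ := by
          rw [hwdef]; simp only []; rw [dif_pos ⟨hj.1, hj.2⟩]
        rw [hwj]
        congr 2
        simp only [Fin.val_mk]
        omega
    rw [step1, step2, step3]
    have hw_i : w i = z p := by
      rw [hwdef]; simp only []; rw [dif_pos ⟨hi1, hi2⟩]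
    rw [hw_i]
    linear_combination (hrow p)
  -- apply part1
  have hzero := part1 hβ1 hβ2 M hM K h σ c hK hh hσ1 hc w hw0 hwM heqw
  funext p
  have h1 := hzero ((p:ℤ) + 1) (by positivity) (by have := p.isLt; omega)
  rw [hwdef] at h1
  simp only [] at h1
  rw [dif_pos (by have := p.isLt; omega)] at h1
  rw [Pi.zero_apply]
  convert h1 using 2
  exact Fin.ext (by simp)

/-- Theorem 2.1 (unique solvability): the homogeneous system
`c w_i = −K σ h^{−β} Σ_{k=i−M}^{i} g_k^{(β)} w_{i−k}` with `w_0 = w_M = 0` has only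
the zero solution; consequently, at each time level the implicit scheme, with
coefficient matrix `c I + σ K h^{−β} G`, has a unique solution. -/
theorem homogeneous_only_zero_and_unique_solvability
    (β : ℝ) (hβ1 : 1 < β) (hβ2 : β ≤ 2) (M : ℕ) (hM : 2 ≤ M)
    (K h σ c : ℝ) (hK : 0 < K) (hh : 0 < h) (hσ1 : 0 < σ) (hσ2 : σ ≤ 1) (hc : 0 < c)
    (w : ℤ → ℝ) (hw0 : w 0 = 0) (hwM : w (M : ℤ) = 0)
    (heq : ∀ i : ℤ, 1 ≤ i → i ≤ (M : ℤ) - 1 →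
      c * w i = -(K * σ * h ^ (-β)) * ∑ k ∈ Finset.Icc (i - (M : ℤ)) i, g β k * w (i - k)) :
    (∀ i : ℤ, 0 ≤ i → i ≤ (M : ℤ) → w i = 0) ∧
    ∀ b : Fin (M - 1) → ℝ, ∃! x : Fin (M - 1) → ℝ, (Amat β M K h σ c).mulVec x = b := by
  constructor
  · exact part1 hβ1 hβ2 M hM K h σ c hK hh hσ1 hc w hw0 hwM heq
  · intro b
    have hker : ∀ z, (Amat β M K h σ c).mulVec z = 0 → z = 0 :=
      fun z hz => part2 β hβ1 hβ2 M hM K h σ c hK hh hσ1 hc z hz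
    have hinj : Function.Injective ((Amat β M K h σ c).mulVecLin) := by
      rw [← LinearMap.ker_eq_bot]
      exact LinearMap.ker_eq_bot'.mpr fun z hz => hker z (by simpa using hz)
    obtain ⟨x, hx⟩ := (LinearMap.injective_iff_surjective.mp hinj) b
    refine ⟨x, by simpa using hx, fun y hy => ?_⟩
    apply hinj
    simp only [Matrix.mulVecLin_apply]
    rw [hy, ← hx]
    simp [Matrix.mulVecLin_apply]
end

section
/- Let 1 < β ≤ 2 and 1 < γ ≤ 2, let M₁, M₂ ≥ 2 be integers, let K₁, K₂ > 0, h₁, h₂ > 0, σ ∈ (0,1], and let c > 0 (in the paper, c = ĉ_0^{(n)} > 0). Let c(G_β) be the (M₁−1)×(M₁−1) circulant matrix with entries c(G_β)_{ij} = r^β_{(i−j) mod (M₁−1)}, where r^β_0 = g_0^{(β)} and r^β_k = g_k^{(β)} + g_{k−(M₁−1)}^{(β)} for 1 ≤ k ≤ M₁−2, and let c(G_γ) be the analogous (M₂−1)×(M₂−1) circulant matrix built from γ. Then the level-2 circulant preconditioner C₂ⁿ = c·I + σ K₁ h₁^{−β} (I_{M₂−1} ⊗ c(G_β)) + σ K₂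 h₂^{−γ} (c(G_γ) ⊗ I_{M₁−1}), where ⊗ is the Kronecker product and I denotes identity matrices of the indicated sizes, is symmetric and positive definite. -/
open scoped Kronecker
open Matrix

set_option linter.unusedVariables false
set_option linter.unusedSectionVars false
set_option linter.unusedTactic false
set_option linter.unnecessarySimpa false

lemma g_two_eq_zero (k : ℤ) (hk : 2 ≤ k) : g 2 k = 0 := by
  have h0 : (((k - 2).toNat : ℕ) : ℤ) = k - 2 := Int.toNat_of_nonneg (by omega)
  have h1 : (((k - 2).toNat : ℕ) : ℝ) = (k : ℝ) - 2 := by exact_mod_cast h0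
  have h : (2 : ℝ) / 2 - k + 1 = -(((k - 2).toNat : ℕ) : ℝ) := by rw [h1]; ring
  unfold g
  rw [h, Real.Gamma_neg_nat_eq_zero, zero_mul, div_zero]

lemma g_rec (β : ℝ) (hβ1 : 1 < β) (hβ2 : β ≤ 2) (k : ℕ) :
    (2 * k + 2 + β) * g β (k + 1) = (2 * k - β) * g β k := by
  rcases eq_or_lt_of_le hβ2 with h2 | h2
  · subst h2
    rcases Nat.eq_zero_or_pos k with rfl | hk
    · have e0 : g 2 0 = 2 := by unfold g; norm_num
      have e1 : g 2 1 = -1 := by unfold g; norm_num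
      norm_num [e0, e1]
    · have h1 : g 2 ((k : ℤ) + 1) = 0 := g_two_eq_zero _ (by omega)
      rw [h1, mul_zero]
      rcases eq_or_ne k 1 with rfl | hk2
      · have e1 : g 2 1 = -1 := by unfold g; norm_num
        norm_num [e1]
      · rw [g_two_eq_zero _ (by omega), mul_zero]
  · -- β < 2
    have ha1 : (1:ℝ)/2 < β / 2 := by linarith
    have ha2 : β / 2 < 1 := by linarith
    have hnonint : ∀ m : ℤ, β / 2 - m ≠ 0 := by
      intro m hm
      have hm' : (m : ℝ) = β / 2 := by linarith
      rcases le_or_gt 1 m with h | h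
      · have : (1:ℝ) ≤ (m:ℝ) := by exact_mod_cast h
        linarith
      · have : (m:ℝ) ≤ 0 := by exact_mod_cast (by omega : m ≤ 0)
        linarith
    have hGne : ∀ m : ℤ, Real.Gamma (β / 2 - m) ≠ 0 := by
      intro m
      apply Real.Gamma_ne_zero
      intro l hl
      apply hnonint (m - l)
      push_cast
      linarith
    have hk2 : (0:ℝ) < Real.Gamma (β / 2 + k + 1) :=
      Real.Gamma_pos_of_pos (by positivity)
    have hak : β / 2 - (k:ℝ) ≠ 0 := by
      have := hnonint k; simpa using this
    have hak1 : β / 2 + (k:ℝ) + 1 ≠ 0 := by positivity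
    have hk1' : Real.Gamma (β / 2 - (k:ℝ)) ≠ 0 := by
      have := hGne k; push_cast at this; exact this
    unfold g
    push_cast
    rw [show β / 2 - ((k:ℝ) + 1) + 1 = β / 2 - k by ring,
      show β / 2 + ((k:ℝ) + 1) + 1 = (β / 2 + k + 1) + 1 by ring,
      Real.Gamma_add_one hak1,
      show β / 2 - (k:ℝ) + 1 = (β / 2 - k) + 1 by ring,
      Real.Gamma_add_one hak,
      zpow_add_one₀ (by norm_num : (-1:ℝ) ≠ 0)]
    rw [← mul_div_assoc, ← mul_div_assoc,
      div_eq_div_iff (by exact mul_ne_zero hk1' (mul_ne_zero hak1 (ne_of_gt hk2)))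
        (by exact mul_ne_zero (mul_ne_zero hak hk1') (ne_of_gt hk2))]
    ring

lemma neg_one_zpow_inv (k : ℤ) : ((-1 : ℝ) ^ k)⁻¹ = (-1 : ℝ) ^ k := by
  rcases Int.even_or_odd k with h | h
  · rw [h.neg_one_zpow]; norm_num
  · rw [h.neg_one_zpow]; norm_num

lemma g_neg (β : ℝ) (k : ℤ) : g β (-k) = g β k := by
  unfold g
  rw [_root_.zpow_neg, neg_one_zpow_inv,
    show β / 2 - (-k : ℤ) + 1 = β / 2 + k + 1 by push_cast; ring,
    show β / 2 + (-k : ℤ) + 1 = β / 2 - k + 1 by push_cast; ring,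
    mul_comm (Real.Gamma (β / 2 + k + 1))]

lemma g_one_nonpos (β : ℝ) (hβ1 : 1 < β) (hβ2 : β ≤ 2) : g β 1 ≤ 0 := by
  unfold g
  rw [show ((1:ℤ)) = ((1:ℕ):ℤ) from rfl]
  push_cast
  rw [zpow_one]
  apply div_nonpos_of_nonpos_of_nonneg
  · have : 0 < Real.Gamma (β + 1) := Real.Gamma_pos_of_pos (by linarith)
    nlinarith
  · have h1 : 0 < Real.Gamma (β / 2 - 1 + 1) := Real.Gamma_pos_of_pos (by linarith)
    have h2 : 0 < Real.Gamma (β / 2 + 1 + 1) := Real.Gamma_pos_of_pos (by linarith)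
    positivity

lemma g_nat_nonpos (β : ℝ) (hβ1 : 1 < β) (hβ2 : β ≤ 2) (k : ℕ) (hk : 1 ≤ k) :
    g β k ≤ 0 := by
  induction k, hk using Nat.le_induction with
  | base => exact_mod_cast g_one_nonpos β hβ1 hβ2
  | succ n hn ih =>
    have hrec := g_rec β hβ1 hβ2 n
    have h1 : (0:ℝ) < 2 * n + 2 + β := by positivity
    have h2 : (0:ℝ) ≤ 2 * n - β := by
      have : (1:ℝ) ≤ (n:ℝ) := by exact_mod_cast hn
      linarith
    have h3 : (2 * (n:ℝ) - β) * g β n ≤ 0 := mul_nonpos_of_nonneg_of_nonpos h2 ih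
    by_contra h
    push_neg at h
    push_cast at h
    nlinarith [hrec, h1, h3, h]

lemma g_int_nonpos (β : ℝ) (hβ1 : 1 < β) (hβ2 : β ≤ 2) (k : ℤ) (hk : k ≠ 0) :
    g β k ≤ 0 := by
  rcases le_or_gt 1 k with h | h
  · have : g β ((k.toNat : ℕ) : ℤ) ≤ 0 := g_nat_nonpos β hβ1 hβ2 _ (by omega)
    rwa [Int.toNat_of_nonneg (by omega)] at this
  · rw [← g_neg]
    have : g β (((-k).toNat : ℕ) : ℤ) ≤ 0 := g_nat_nonpos β hβ1 hβ2 _ (by omega)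
    rwa [Int.toNat_of_nonneg (by omega)] at this

lemma g_sum_formula (β : ℝ) (hβ1 : 1 < β) (hβ2 : β ≤ 2) (N : ℕ) :
    β * (g β 0 + 2 * ∑ k ∈ Finset.range N, g β (k + 1)) =
      -(2 * N + 2 + β) * g β (N + 1) := by
  induction N with
  | zero =>
    have := g_rec β hβ1 hβ2 0
    push_cast at this ⊢
    simp only [Finset.range_zero, Finset.sum_empty] at *
    linarith
  | succ n ih =>
    rw [Finset.sum_range_succ]
    have hrec := g_rec β hβ1 hβ2 (n + 1)
    push_cast at hrec ih ⊢
    linarith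

lemma g_sum_nonneg (β : ℝ) (hβ1 : 1 < β) (hβ2 : β ≤ 2) (N : ℕ) :
    0 ≤ g β 0 + 2 * ∑ k ∈ Finset.range N, g β (k + 1) := by
  have h1 := g_sum_formula β hβ1 hβ2 N
  have h2 : g β ((N:ℤ) + 1) ≤ 0 := by
    have := g_int_nonpos β hβ1 hβ2 ((N:ℤ) + 1) (by omega)
    exact this
  have h3 : (0:ℝ) < 2 * N + 2 + β := by positivity
  nlinarith


section DD
variable {ι : Type*} [Fintype ι] [DecidableEq ι]

lemma posSemidef_of_dd {A : Matrix ι ι ℝ} (hs : A.IsSymm)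
    (hoff : ∀ i j, i ≠ j → A i j ≤ 0) (hrow : ∀ i, 0 ≤ ∑ j, A i j) :
    A.PosSemidef := by
  rw [Matrix.posSemidef_iff_dotProduct_mulVec]
  constructor
  · rw [Matrix.IsHermitian, Matrix.conjTranspose_eq_transpose_of_trivial, hs]
  · intro x
    rw [star_trivial]
    have hgoal : x ⬝ᵥ A *ᵥ x = ∑ i, ∑ j, A i j * (x i * x j) := by
      simp only [dotProduct, Matrix.mulVec, Finset.mul_sum]
      exact Finset.sum_congr rfl fun i _ => Finset.sum_congr rfl fun j _ => by ring
    have hswap : (∑ i, ∑ j, A i j * x j ^ 2) = ∑ i, ∑ j, A i j * x i ^ 2 := by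
      rw [Finset.sum_comm]
      exact Finset.sum_congr rfl fun i _ => Finset.sum_congr rfl fun j _ => by
        rw [hs.apply]
    have e1 : ∑ i, ∑ j, -A i j * (x i - x j) ^ 2
        = 2 * (∑ i, ∑ j, A i j * (x i * x j)) - 2 * (∑ i, ∑ j, A i j * x i ^ 2) := by
      have h2 : ∀ i : ι, ∀ j : ι, -A i j * (x i - x j) ^ 2
          = 2 * (A i j * (x i * x j)) - A i j * x i ^ 2 - A i j * x j ^ 2 :=
        fun i j => by ring
      simp only [h2, Finset.sum_sub_distrib, ← Finset.mul_sum]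
      rw [hswap]
      ring
    have nn1 : 0 ≤ ∑ i, ∑ j, -A i j * (x i - x j) ^ 2 := by
      refine Finset.sum_nonneg fun i _ => Finset.sum_nonneg fun j _ => ?_
      rcases eq_or_ne i j with rfl | h
      · simp
      · exact mul_nonneg (by linarith [hoff i j h]) (sq_nonneg _)
    have nn2 : 0 ≤ ∑ i, ∑ j, A i j * x i ^ 2 := by
      refine Finset.sum_nonneg fun i _ => ?_
      rw [← Finset.sum_mul]
      exact mul_nonneg (hrow i) (sq_nonneg _)
    rw [hgoal]
    linarith

end DD

section Kron
variable {m n : Type*} [Fintype m] [Fintype n] [DecidableEq m] [DecidableEq n]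

lemma psd_one_kron {A : Matrix n n ℝ} (hA : A.PosSemidef) :
    ((1 : Matrix m m ℝ) ⊗ₖ A).PosSemidef := by
  exact Matrix.PosSemidef.one.kronecker hA

lemma psd_kron_one {A : Matrix n n ℝ} (hA : A.PosSemidef) :
    (A ⊗ₖ (1 : Matrix m m ℝ)).PosSemidef := by
  exact hA.kronecker Matrix.PosSemidef.one

end Kron

section Smul
variable {ι : Type*} [Fintype ι] [DecidableEq ι]

lemma posSemidef_smul {A : Matrix ι ι ℝ} (hA : A.PosSemidef) {c : ℝ} (hc : 0 ≤ c) :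
    (c • A).PosSemidef := by
  rw [Matrix.posSemidef_iff_dotProduct_mulVec]
  constructor
  · rw [Matrix.IsHermitian, Matrix.conjTranspose_smul, star_trivial, hA.1]
  · intro x
    rw [Matrix.smul_mulVec, dotProduct_smul, smul_eq_mul]
    exact mul_nonneg hc (hA.dotProduct_mulVec_nonneg x)

lemma posDef_smul {A : Matrix ι ι ℝ} (hA : A.PosDef) {c : ℝ} (hc : 0 < c) :
    (c • A).PosDef := by
  rw [Matrix.posDef_iff_dotProduct_mulVec]
  constructor
  · rw [Matrix.IsHermitian, Matrix.conjTranspose_smul, star_trivial, hA.1]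
  · intro x hx
    rw [Matrix.smul_mulVec, dotProduct_smul, smul_eq_mul]
    exact mul_pos hc (hA.dotProduct_mulVec_pos hx)

end Smul

/-- First-column entries of the R. Chan circulant approximation of size `M−1`:
`r_0 = g_0`, `r_k = g_k + g_{k−(M−1)}` for `1 ≤ k ≤ M−2`. -/
noncomputable def rchan (β : ℝ) (M : ℕ) (k : ℤ) : ℝ :=
  if k = 0 then g β 0 else g β k + g β (k - ((M : ℤ) - 1))

/-- The R. Chan circulant approximation `c(G)` of the Toeplitz matrix `G`. -/
noncomputable def cG (β : ℝ) (M : ℕ) : Matrix (Fin (M - 1)) (Fin (M - 1)) ℝ :=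
  Matrix.of fun i j => rchan β M (((i : ℤ) - (j : ℤ)) % ((M : ℤ) - 1))

/-- The level-2 circulant preconditioner
`C₂ⁿ = c I + σ K₁ h₁^{−β} (I ⊗ c(G_β)) + σ K₂ h₂^{−γ} (c(G_γ) ⊗ I)`. -/
noncomputable def C2mat (β γ : ℝ) (M₁ M₂ : ℕ) (K₁ K₂ h₁ h₂ σ c : ℝ) :
    Matrix (Fin (M₂ - 1) × Fin (M₁ - 1)) (Fin (M₂ - 1) × Fin (M₁ - 1)) ℝ :=
  c • (1 : Matrix (Fin (M₂ - 1) × Fin (M₁ - 1)) (Fin (M₂ - 1) × Fin (M₁ - 1)) ℝ) +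
    (σ * K₁ * h₁ ^ (-β)) • ((1 : Matrix (Fin (M₂ - 1)) (Fin (M₂ - 1)) ℝ) ⊗ₖ cG β M₁) +
    (σ * K₂ * h₂ ^ (-γ)) • (cG γ M₂ ⊗ₖ (1 : Matrix (Fin (M₁ - 1)) (Fin (M₁ - 1)) ℝ))
section cG

variable {β : ℝ} {M : ℕ}

lemma emod_ne_zero (hM : 2 ≤ M) (i j : Fin (M - 1)) (h : (i : ℤ) ≠ (j : ℤ)) :
    ((i : ℤ) - j) % ((M : ℤ) - 1) ≠ 0 := by
  intro h0
  obtain ⟨c, hc⟩ := Int.dvd_of_emod_eq_zero h0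
  have hi : (i : ℤ) < (M : ℤ) - 1 := by
    have := i.isLt; omega
  have hj : (j : ℤ) < (M : ℤ) - 1 := by
    have := j.isLt; omega
  have hi0 : 0 ≤ (i : ℤ) := Int.ofNat_nonneg _
  have hj0 : 0 ≤ (j : ℤ) := Int.ofNat_nonneg _
  have hn : (0:ℤ) < (M : ℤ) - 1 := by omega
  have hne : c ≠ 0 := by
    intro hc0; rw [hc0, mul_zero] at hc; omega
  rcases lt_or_gt_of_ne hne with hlt | hgt
  · have : ((M:ℤ) - 1) * c ≤ ((M:ℤ) - 1) * (-1) := by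
      apply mul_le_mul_of_nonneg_left (by omega) (by omega)
    omega
  · have : ((M:ℤ) - 1) * 1 ≤ ((M:ℤ) - 1) * c := by
      apply mul_le_mul_of_nonneg_left (by omega) (by omega)
    omega

lemma emod_rev (hM : 2 ≤ M) (i j : Fin (M - 1)) (h : (i : ℤ) ≠ (j : ℤ)) :
    ((j : ℤ) - i) % ((M : ℤ) - 1) = ((M : ℤ) - 1) - ((i : ℤ) - j) % ((M : ℤ) - 1) := by
  set n' : ℤ := (M : ℤ) - 1 with hn'
  have hn : (0:ℤ) < n' := by omega
  set d := ((i : ℤ) - j) % n' with hd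
  have hd0 : 0 ≤ d := Int.emod_nonneg _ (by omega)
  have hdlt : d < n' := Int.emod_lt_of_pos _ hn
  have hdne : d ≠ 0 := emod_ne_zero hM i j h
  have hq := Int.mul_ediv_add_emod ((i : ℤ) - j) n'
  have hrw : (j : ℤ) - i = (n' - d) + n' * (-(((i : ℤ) - j) / n') - 1) := by
    linear_combination hq
  rw [hrw, Int.add_mul_emod_self_left, Int.emod_eq_of_lt (by omega) (by omega)]

lemma cG_isSymm (hβ1 : 1 < β) (hβ2 : β ≤ 2) (hM : 2 ≤ M) : (cG β M).IsSymm := by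
  apply Matrix.IsSymm.ext
  intro i j
  show rchan β M (((j : ℤ) - i) % ((M : ℤ) - 1)) = rchan β M (((i : ℤ) - j) % ((M : ℤ) - 1))
  rcases eq_or_ne (i : ℤ) (j : ℤ) with h | h
  · rw [h]
  · have hdne := emod_ne_zero hM i j h
    have hedne := emod_ne_zero hM j i (Ne.symm h)
    rw [emod_rev hM i j h]
    set d := ((i : ℤ) - j) % ((M : ℤ) - 1) with hd
    have hrev : ((M : ℤ) - 1) - d ≠ 0 := by
      rw [← emod_rev hM i j h]; exact hedne
    unfold rchan
    rw [if_neg hdne, if_neg hrev]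
    rw [show (M : ℤ) - 1 - d - ((M : ℤ) - 1) = -d by ring, g_neg,
      show (M : ℤ) - 1 - d = -(d - ((M : ℤ) - 1)) by ring, g_neg]
    exact add_comm _ _

lemma cG_offdiag_nonpos (hβ1 : 1 < β) (hβ2 : β ≤ 2) (hM : 2 ≤ M)
    (i j : Fin (M - 1)) (h : i ≠ j) : cG β M i j ≤ 0 := by
  have h' : (i : ℤ) ≠ (j : ℤ) := by
    intro hh
    apply h
    have : (i : ℕ) = (j : ℕ) := by exact_mod_cast hh
    exact Fin.ext this
  have hdne := emod_ne_zero hM i j h'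
  have hn : (0:ℤ) < (M : ℤ) - 1 := by omega
  have hdlt : ((i : ℤ) - j) % ((M : ℤ) - 1) < (M : ℤ) - 1 :=
    Int.emod_lt_of_pos _ hn
  show rchan β M (((i : ℤ) - j) % ((M : ℤ) - 1)) ≤ 0
  unfold rchan
  rw [if_neg hdne]
  have h1 : g β (((i : ℤ) - j) % ((M : ℤ) - 1)) ≤ 0 :=
    g_int_nonpos β hβ1 hβ2 _ hdne
  have h2 : g β (((i : ℤ) - j) % ((M : ℤ) - 1) - ((M : ℤ) - 1)) ≤ 0 :=
    g_int_nonpos β hβ1 hβ2 _ (by omega)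
  linarith

lemma fin_sub_coe (hM : 2 ≤ M) (i j : Fin (M - 1)) :
    (((i - j : Fin (M - 1)) : ℕ) : ℤ) = ((i : ℤ) - (j : ℤ)) % ((M : ℤ) - 1) := by
  rw [Fin.sub_def]
  simp only [Fin.val_mk]
  have hj : (j : ℕ) ≤ M - 1 := le_of_lt j.isLt
  push_cast
  have hM1 : ((M - 1 - (j : ℕ) : ℕ) : ℤ) = (M : ℤ) - 1 - (j : ℤ) := by omega
  have hc : ((M - 1 : ℕ) : ℤ) = (M : ℤ) - 1 := by omega
  rw [hM1, hc, show ((M:ℤ) - 1 - j + i) = ((i : ℤ) - j) + ((M:ℤ) - 1) * 1 by ring,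
    Int.add_mul_emod_self_left]

lemma cG_rowsum_nonneg (hβ1 : 1 < β) (hβ2 : β ≤ 2) (hM : 2 ≤ M) (i : Fin (M - 1)) :
    0 ≤ ∑ j, cG β M i j := by
  haveI : NeZero (M - 1) := ⟨by omega⟩
  have key : ∀ j : Fin (M - 1), cG β M i j = rchan β M (((i - j : Fin (M - 1)) : ℕ) : ℤ) := by
    intro j
    show rchan β M (((i : ℤ) - j) % ((M : ℤ) - 1)) = _
    rw [fin_sub_coe hM i j]
  calc (0:ℝ) ≤ g β 0 + 2 * ∑ k ∈ Finset.range (M - 2), g β (k + 1) :=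
        g_sum_nonneg β hβ1 hβ2 (M - 2)
    _ = ∑ j, cG β M i j := ?_
  rw [Finset.sum_congr rfl fun j _ => key j]
  rw [Fintype.sum_equiv (Equiv.subLeft i)
    (fun j : Fin (M-1) => rchan β M (((i - j : Fin (M - 1)) : ℕ) : ℤ))
    (fun d : Fin (M-1) => rchan β M ((d : ℕ) : ℤ)) (fun j => rfl)]
  rw [Fin.sum_univ_eq_sum_range (fun k => rchan β M (k : ℤ)) (M - 1)]
  obtain ⟨m, hm⟩ : ∃ m, M - 1 = m + 1 := ⟨M - 2, by omega⟩
  rw [hm, Finset.sum_range_succ']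
  have h0 : rchan β M ((0 : ℕ) : ℤ) = g β 0 := by
    simp [rchan]
  have hstep : ∀ k ∈ Finset.range m, rchan β M ((k + 1 : ℕ) : ℤ)
      = g β (k + 1) + g β ((k : ℤ) - m) := by
    intro k _
    unfold rchan
    rw [if_neg (by omega)]
    rw [show ((k + 1 : ℕ) : ℤ) = (k : ℤ) + 1 by push_cast; ring,
      show ((k : ℤ) + 1) - ((M : ℤ) - 1) = (k : ℤ) - m by omega]
  rw [Finset.sum_congr rfl hstep, Finset.sum_add_distrib, h0]
  have hrefl : ∑ k ∈ Finset.range m, g β ((k : ℤ) - m)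
      = ∑ k ∈ Finset.range m, g β ((k : ℤ) + 1) := by
    rw [← Finset.sum_range_reflect (fun k => g β ((k : ℤ) - m)) m]
    apply Finset.sum_congr rfl
    intro k hk
    rw [Finset.mem_range] at hk
    rw [show ((m - 1 - k : ℕ) : ℤ) - m = -((k : ℤ) + 1) by omega, g_neg]
  rw [hrefl]
  have hm2 : m = M - 2 := by omega
  rw [hm2]
  push_cast
  ring

end cG


/-- Lemma 3.2: the level-2 circulant preconditioner `C₂ⁿ` is symmetric and
positive definite. -/
theorem C2mat_isSymm_posDef (β γ : ℝ) (hβ1 : 1 < β) (hβ2 : β ≤ 2)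
    (hγ1 : 1 < γ) (hγ2 : γ ≤ 2) (M₁ M₂ : ℕ) (hM₁ : 2 ≤ M₁) (hM₂ : 2 ≤ M₂)
    (K₁ K₂ h₁ h₂ σ c : ℝ) (hK₁ : 0 < K₁) (hK₂ : 0 < K₂) (hh₁ : 0 < h₁) (hh₂ : 0 < h₂)
    (hσ1 : 0 < σ) (hσ2 : σ ≤ 1) (hc : 0 < c) :
    (C2mat β γ M₁ M₂ K₁ K₂ h₁ h₂ σ c).IsSymm ∧
      (C2mat β γ M₁ M₂ K₁ K₂ h₁ h₂ σ c).PosDef := by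
  have hcGβ : (cG β M₁).PosSemidef :=
    posSemidef_of_dd (cG_isSymm hβ1 hβ2 hM₁) (cG_offdiag_nonpos hβ1 hβ2 hM₁)
      (cG_rowsum_nonneg hβ1 hβ2 hM₁)
  have hcGγ : (cG γ M₂).PosSemidef :=
    posSemidef_of_dd (cG_isSymm hγ1 hγ2 hM₂) (cG_offdiag_nonpos hγ1 hγ2 hM₂)
      (cG_rowsum_nonneg hγ1 hγ2 hM₂)
  have h1 : ((1 : Matrix (Fin (M₂ - 1)) (Fin (M₂ - 1)) ℝ) ⊗ₖ cG β M₁).PosSemidef :=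
    psd_one_kron hcGβ
  have h2 : (cG γ M₂ ⊗ₖ (1 : Matrix (Fin (M₁ - 1)) (Fin (M₁ - 1)) ℝ)).PosSemidef :=
    psd_kron_one hcGγ
  have hs1 : 0 ≤ σ * K₁ * h₁ ^ (-β) := by positivity
  have hs2 : 0 ≤ σ * K₂ * h₂ ^ (-γ) := by positivity
  have hPD : (C2mat β γ M₁ M₂ K₁ K₂ h₁ h₂ σ c).PosDef := by
    unfold C2mat
    exact Matrix.PosDef.add_posSemidef
      (Matrix.PosDef.add_posSemidef (posDef_smul Matrix.PosDef.one hc)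
        (posSemidef_smul h1 hs1))
      (posSemidef_smul h2 hs2)
  refine ⟨?_, hPD⟩
  rw [Matrix.IsSymm, ← Matrix.conjTranspose_eq_transpose_of_trivial]
  exact hPD.1
end
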